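/- (Lemma 7.3, projections onto the subspaces S_t^d) Let d ≥ 1, let t ≥ 0 be an integer and let u ∈ ℝ^{2d}. If ‖P_{S_t^d}(u)‖₂ < ‖u‖₂/(2π(1+t²)), then for every integer j with 0 ≤ j < t one has ‖P_{S_j^d}(u)‖₂ ≥ ‖u‖₂/(2π(1+j²)). -/

import Mathlib

/-!
Write `u = (y, w)`. Since `⟪u, (v, s v)⟫ = ⟪y + s w, v⟫` and `‖(v, s v)‖ = √(1 + s²) ‖v‖`,
testing the projection onto `S_s^d` against `(y + s w, s (y + s w))` gives
`‖y + s w‖ ≤ √(1 + s²) ‖P_{S_s^d} u‖`. If the projections onto `S_j^d` and `S_t^d` were both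
small, `y + j w` and `y + t w` would both be shorter than `r = ‖u‖ / (2π √(1 + j²))`. As
`t - j ≥ 1` this forces `‖w‖ < 2r` and `‖y‖ < (1 + 2j) r`, so
`‖u‖² < ((1 + 2j)² + 4) r² ≤ 4π² (1 + j²) r² = ‖u‖²`.
-/

/-- Concatenation of two vectors of `ℝ^d` into a vector of `ℝ^{2d}`. -/
noncomputable def concatVec {d : ℕ} (y w : EuclideanSpace ℝ (Fin d)) :
    EuclideanSpace ℝ (Fin d ⊕ Fin d) := WithLp.toLp 2 (Sum.elim y w)

/-- The linear embedding `v ↦ (v, t v)` of `ℝ^d` into `ℝ^{2d}`. -/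
noncomputable def Smap (d : ℕ) (t : ℝ) :
    EuclideanSpace ℝ (Fin d) →ₗ[ℝ] EuclideanSpace ℝ (Fin d ⊕ Fin d) where
  toFun v := concatVec v (t • v)
  map_add' u w := by
    ext i
    cases i with
    | inl i => rfl
    | inr i =>
      show t * (u i + w i) = t * u i + t * w i
      ring
  map_smul' c v := by
    ext i
    cases i with
    | inl i => rfl
    | inr i =>
      show t * (c * v i) = c * (t * v i)
      ring

/-- The subspace `S_t^d = {(v, t v) : v ∈ ℝ^d}` of `ℝ^{2d}`. -/
noncomputable def Ssub (d : ℕ) (t : ℝ) : Submodule ℝ (EuclideanSpace ℝ (Fin d ⊕ Fin d)) :=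
  LinearMap.range (Smap d t)

open Real
open scoped RealInnerProductSpace

section RangeProjection

variable {E F : Type*} [NormedAddCommGroup E] [InnerProductSpace ℝ E]
  [NormedAddCommGroup F] [InnerProductSpace ℝ F]

theorem norm_le_mul_norm_starProjection_range {T : F →ₗ[ℝ] E}
    [(LinearMap.range T).HasOrthogonalProjection]
    {c : ℝ} (hc : 0 ≤ c) (hT : ∀ v, ‖T v‖ = c * ‖v‖) {u : E} {z : F}
    (huz : ∀ v, ⟪u, T v⟫ = ⟪z, v⟫) :
    ‖z‖ ≤ c * ‖(LinearMap.range T).starProjection u‖ := by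
  set p := (LinearMap.range T).starProjection u
  have hz : ‖z‖ ^ 2 ≤ c * ‖p‖ * ‖z‖ :=
    calc ‖z‖ ^ 2 = ⟪u, T z⟫ := by rw [huz, real_inner_self_eq_norm_sq]
      _ = ⟪p, T z⟫ := by
        rw [Submodule.inner_starProjection_left_eq_right,
          Submodule.starProjection_eq_self_iff.mpr (LinearMap.mem_range_self T z)]
      _ ≤ ‖p‖ * ‖T z‖ := real_inner_le_norm _ _
      _ = c * ‖p‖ * ‖z‖ := by rw [hT]; ring
  nlinarith [norm_nonneg z, norm_nonneg p, mul_nonneg hc (norm_nonneg p)]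

end RangeProjection

section Halves

variable {d : ℕ}

noncomputable def fstHalf (u : EuclideanSpace ℝ (Fin d ⊕ Fin d)) : EuclideanSpace ℝ (Fin d) :=
  WithLp.toLp 2 fun i => u (Sum.inl i)

noncomputable def sndHalf (u : EuclideanSpace ℝ (Fin d ⊕ Fin d)) : EuclideanSpace ℝ (Fin d) :=
  WithLp.toLp 2 fun i => u (Sum.inr i)

theorem norm_sq_eq_norm_fstHalf_sq_add_norm_sndHalf_sq
    (u : EuclideanSpace ℝ (Fin d ⊕ Fin d)) :
    ‖u‖ ^ 2 = ‖fstHalf u‖ ^ 2 + ‖sndHalf u‖ ^ 2 := by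
  simp only [EuclideanSpace.norm_sq_eq, Fintype.sum_sum_type]
  rfl

theorem fstHalf_Smap (t : ℝ) (v : EuclideanSpace ℝ (Fin d)) : fstHalf (Smap d t v) = v := rfl

theorem sndHalf_Smap (t : ℝ) (v : EuclideanSpace ℝ (Fin d)) :
    sndHalf (Smap d t v) = t • v := rfl

theorem inner_Smap (t : ℝ) (u : EuclideanSpace ℝ (Fin d ⊕ Fin d))
    (v : EuclideanSpace ℝ (Fin d)) :
    ⟪u, Smap d t v⟫ = ⟪fstHalf u + t • sndHalf u, v⟫ := by
  simp only [PiLp.inner_apply, Fintype.sum_sum_type, ← Finset.sum_add_distrib]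
  refine Finset.sum_congr rfl fun i _ => ?_
  simp only [RCLike.inner_apply, conj_trivial]
  change v i * u (Sum.inl i) + t * v i * u (Sum.inr i) =
    v i * (u (Sum.inl i) + t * u (Sum.inr i))
  ring

theorem norm_Smap (t : ℝ) (v : EuclideanSpace ℝ (Fin d)) :
    ‖Smap d t v‖ = √(1 + t ^ 2) * ‖v‖ := by
  have hsq : ‖Smap d t v‖ ^ 2 = (1 + t ^ 2) * ‖v‖ ^ 2 := by
    rw [← real_inner_self_eq_norm_sq, inner_Smap, fstHalf_Smap, sndHalf_Smap, smul_smul,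
      inner_add_left, real_inner_smul_left, real_inner_self_eq_norm_sq]
    ring
  rw [← sqrt_sq (norm_nonneg _), hsq, sqrt_mul (by positivity), sqrt_sq (norm_nonneg _)]

theorem norm_fstHalf_add_smul_sndHalf_le (t : ℝ) (u : EuclideanSpace ℝ (Fin d ⊕ Fin d)) :
    ‖fstHalf u + t • sndHalf u‖ ≤ √(1 + t ^ 2) * ‖(Ssub d t).starProjection u‖ :=
  norm_le_mul_norm_starProjection_range (sqrt_nonneg _) (norm_Smap t) (inner_Smap t u)

theorem norm_fstHalf_add_smul_sndHalf_lt {t c : ℝ} {u : EuclideanSpace ℝ (Fin d ⊕ Fin d)}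
    (h : ‖(Ssub d t).starProjection u‖ < c / (1 + t ^ 2)) :
    ‖fstHalf u + t • sndHalf u‖ < c / √(1 + t ^ 2) :=
  calc ‖fstHalf u + t • sndHalf u‖ ≤ √(1 + t ^ 2) * ‖(Ssub d t).starProjection u‖ :=
        norm_fstHalf_add_smul_sndHalf_le t u
    _ < √(1 + t ^ 2) * (c / (1 + t ^ 2)) := by gcongr
    _ = c / √(1 + t ^ 2) := by rw [mul_div_left_comm, sqrt_div_self', mul_one_div]

end Halves

theorem norm_lt_of_norm_add_smul_lt {E : Type*} [SeminormedAddCommGroup E] [NormedSpace ℝ E]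
    {y w : E} {r s t : ℝ} (hs : 0 ≤ s) (hst : s + 1 ≤ t)
    (hys : ‖y + s • w‖ < r) (hyt : ‖y + t • w‖ < r) :
    ‖w‖ < 2 * r ∧ ‖y‖ < (1 + 2 * s) * r := by
  have hw : ‖w‖ < 2 * r :=
    calc ‖w‖ ≤ (t - s) * ‖w‖ := le_mul_of_one_le_left (norm_nonneg w) (by linarith)
      _ = ‖(y + t • w) - (y + s • w)‖ := by
        rw [add_sub_add_left_eq_sub, ← sub_smul, norm_smul, norm_of_nonneg (by linarith)]
      _ ≤ ‖y + t • w‖ + ‖y + s • w‖ := norm_sub_le _ _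
      _ < 2 * r := by linarith
  refine ⟨hw, ?_⟩
  calc ‖y‖ = ‖(y + s • w) - s • w‖ := by rw [add_sub_cancel_right]
    _ ≤ ‖y + s • w‖ + s * ‖w‖ :=
      (norm_sub_le _ _).trans_eq (by rw [norm_smul, norm_of_nonneg hs])
    _ < (1 + 2 * s) * r := by nlinarith

theorem projection_onto_Std_subspaces_general
    (d : ℕ) (t : ℕ) (u : EuclideanSpace ℝ (Fin d ⊕ Fin d))
    (h : ‖((Ssub d (t : ℝ)).orthogonalProjection u : EuclideanSpace ℝ (Fin d ⊕ Fin d))‖ <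
      ‖u‖ / (2 * Real.pi * (1 + (t : ℝ) ^ 2))) :
    ∀ j : ℕ, j < t →
      ‖u‖ / (2 * Real.pi * (1 + (j : ℝ) ^ 2)) ≤
        ‖((Ssub d (j : ℝ)).orthogonalProjection u : EuclideanSpace ℝ (Fin d ⊕ Fin d))‖ := by
  intro j hjt
  by_contra! hj
  set r := ‖u‖ / (2 * π) / √(1 + (j : ℝ) ^ 2)
  have hzj : ‖fstHalf u + (j : ℝ) • sndHalf u‖ < r :=
    norm_fstHalf_add_smul_sndHalf_lt (by rwa [div_div])
  have hzt : ‖fstHalf u + (t : ℝ) • sndHalf u‖ < r :=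
    (norm_fstHalf_add_smul_sndHalf_lt (by rwa [div_div])).trans_le <|
      div_le_div_of_nonneg_left (by positivity) (by positivity) (by gcongr)
  obtain ⟨hw, hy⟩ := norm_lt_of_norm_add_smul_lt j.cast_nonneg (by exact_mod_cast hjt) hzj hzt
  have hr : (2 * π) ^ 2 * (1 + (j : ℝ) ^ 2) * r ^ 2 = ‖u‖ ^ 2 := by
    rw [div_pow, div_pow, sq_sqrt (by positivity)]
    field_simp
  have hconst : (1 + 2 * (j : ℝ)) ^ 2 + 2 ^ 2 ≤ (2 * π) ^ 2 * (1 + (j : ℝ) ^ 2) :=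
    calc (1 + 2 * (j : ℝ)) ^ 2 + 2 ^ 2 ≤ 6 ^ 2 * (1 + (j : ℝ) ^ 2) := by
          nlinarith [sq_nonneg (4 * (j : ℝ) - 1)]
      _ ≤ (2 * π) ^ 2 * (1 + (j : ℝ) ^ 2) := by gcongr; linarith [pi_gt_three]
  refine lt_irrefl (‖u‖ ^ 2) ?_
  calc ‖u‖ ^ 2 = ‖fstHalf u‖ ^ 2 + ‖sndHalf u‖ ^ 2 :=
        norm_sq_eq_norm_fstHalf_sq_add_norm_sndHalf_sq u
    _ < ((1 + 2 * (j : ℝ)) * r) ^ 2 + (2 * r) ^ 2 :=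
      add_lt_add (pow_lt_pow_left₀ hy (norm_nonneg _) two_ne_zero)
        (pow_lt_pow_left₀ hw (norm_nonneg _) two_ne_zero)
    _ = ((1 + 2 * (j : ℝ)) ^ 2 + 2 ^ 2) * r ^ 2 := by ring
    _ ≤ (2 * π) ^ 2 * (1 + (j : ℝ) ^ 2) * r ^ 2 := by gcongr
    _ = ‖u‖ ^ 2 := hr

/-- Lemma 7.3: if the projection of `u` onto `S_t^d` is small then its
projection onto every earlier `S_j^d` is large. -/
theorem projection_onto_Std_subspaces
    (d : ℕ) (hd : 1 ≤ d) (t : ℕ) (u : EuclideanSpace ℝ (Fin d ⊕ Fin d))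
    (h : ‖((Ssub d (t : ℝ)).orthogonalProjection u : EuclideanSpace ℝ (Fin d ⊕ Fin d))‖ <
      ‖u‖ / (2 * Real.pi * (1 + (t : ℝ) ^ 2))) :
    ∀ j : ℕ, j < t →
      ‖u‖ / (2 * Real.pi * (1 + (j : ℝ) ^ 2)) ≤
        ‖((Ssub d (j : ℝ)).orthogonalProjection u : EuclideanSpace ℝ (Fin d ⊕ Fin d))‖ :=
  projection_onto_Std_subspaces_general d t u h
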